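/- With the setup of the previous statement (M > 0, p = r - iax, Σ = r² + a²x² ≠ 0, p ≠ 0, pairing ⟨f,g⟩ = (Δ_r/Σ)(∂_r f)(∂_r g) + ((1-x²)/Σ)(∂_x f)(∂_x g), 𝓘 = -M^{1/3}/p, 𝕄 = -𝓘^{-4}⟨𝓘,𝓘⟩ + 𝓘 + conj(𝓘) = -M^{-2/3}), the second curvature invariant 𝔸 := -|𝓘|^{-4}·⟨𝓘/conj(𝓘), conj(𝓘)/𝓘⟩ - 2·Im(1/𝓘²)·Im(2𝓘 - 𝕄) is constant: 𝔸 = -4a²M^{-4/3} at every point where p ≠ 0 and Σ ≠ 0. -/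

import Mathlib

/-!
Since `𝓘 / conj 𝓘 = conj p / p` is a pure phase, for any nonvanishing `f` one has
`∂(f / conj f) · ∂(conj f / f) = 4 (Im (∂f · conj f))² / |f|⁴`; with `∂_r 𝓘 = c / p²`,
`∂_x 𝓘 = -i a c / p²` (`c = M^{1/3}`) this gives
`-|𝓘|⁻⁴ ⟨𝓘 / conj 𝓘, conj 𝓘 / 𝓘⟩ = -4a² (Δ_r x² + (1 - x²) r²) / (c⁴ Σ)`.
The invariant `𝕄` enters only through `Im 𝕄 = 0`: `𝓘⁻⁴ ⟨𝓘, 𝓘⟩ = ⟨1/𝓘, 1/𝓘⟩ = ⟨p, p⟩ / c²` is real.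
With `Im (1/𝓘²) = -2arx / c²` and `Im 𝓘 = -c a x / Σ` the second term is `-8a² M r x² / (c⁴ Σ)`,
and the sum collapses to `-4a² Σ / (c⁴ Σ)`.
-/

open Complex

/-- The `(r,x)`-block gradient pairing of the inverse Kerr metric. -/
noncomputable def kerrPairing (a M : ℝ) (f g : ℝ → ℝ → ℂ) (r x : ℝ) : ℂ :=
  (((r ^ 2 - 2 * M * r + a ^ 2) / (r ^ 2 + a ^ 2 * x ^ 2) : ℝ) : ℂ) *
      deriv (fun s => f s x) r * deriv (fun s => g s x) r
  + (((1 - x ^ 2) / (r ^ 2 + a ^ 2 * x ^ 2) : ℝ) : ℂ) *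
      deriv (fun s => f r s) x * deriv (fun s => g r s) x

open ComplexConjugate

theorem deriv_div_conj_mul_deriv_conj_div {f : ℝ → ℂ} {f' : ℂ} {t : ℝ}
    (hf : HasDerivAt f f' t) (h0 : f t ≠ 0) :
    deriv (fun s => f s / conj (f s)) t * deriv (fun s => conj (f s) / f s) t
      = ((4 * (f' * conj (f t)).im ^ 2 / ‖f t‖ ^ 4 : ℝ) : ℂ) := by
  have hc : HasDerivAt (fun s => conj (f s)) (conj f') t := hf.star
  have h0' : conj (f t) ≠ 0 := (map_ne_zero _).mpr h0
  rw [(hf.fun_div hc h0').deriv, (hc.fun_div hf h0).deriv]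
  have hw : f' * conj (f t) - f t * conj f' =
      ((2 * (f' * conj (f t)).im : ℝ) : ℂ) * Complex.I := by
    rw [← sub_conj]; simp [mul_comm]
  have hn : f t * conj (f t) = ((‖f t‖ ^ 2 : ℝ) : ℂ) := by rw [mul_conj']; push_cast; rfl
  calc _ = -(f' * conj (f t) - f t * conj f') ^ 2 / (f t * conj (f t)) ^ 2 := by
          field_simp; ring
    _ = _ := by rw [hw, hn, mul_pow, I_sq]; push_cast; ring

theorem HasDerivAt.neg_const_div {f : ℝ → ℂ} {f' : ℂ} {t : ℝ} (c : ℂ)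
    (hf : HasDerivAt f f' t) (h0 : f t ≠ 0) :
    HasDerivAt (fun s => -c / f s) (c * f' / f t ^ 2) t := by
  simpa [div_eq_mul_inv, neg_div, mul_assoc] using (hf.fun_inv h0).const_mul (-c)

noncomputable section

variable {a c M r x : ℝ}

def kerrP (a r x : ℝ) : ℂ := r - Complex.I * a * x

def kerrI (c a r x : ℝ) : ℂ := -(c : ℂ) / kerrP a r x

@[simp] theorem kerrP_re : (kerrP a r x).re = r := by simp [kerrP]

@[simp] theorem kerrP_im : (kerrP a r x).im = -(a * x) := by simp [kerrP]

@[simp] theorem normSq_kerrP : normSq (kerrP a r x) = r ^ 2 + a ^ 2 * x ^ 2 := by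
  simp [normSq_apply]; ring

theorem kerrSigma_ne_zero (hp : kerrP a r x ≠ 0) : r ^ 2 + a ^ 2 * x ^ 2 ≠ 0 :=
  normSq_kerrP (a := a) ▸ (normSq_pos.mpr hp).ne'

theorem hasDerivAt_kerrP_fst : HasDerivAt (fun s => kerrP a s x) 1 r :=
  (hasDerivAt_id r).ofReal_comp.sub_const _

theorem hasDerivAt_kerrP_snd : HasDerivAt (fun s => kerrP a r s) (-(Complex.I * a)) x := by
  simpa [kerrP] using ((hasDerivAt_id x).ofReal_comp.const_mul (Complex.I * a)).const_sub (r : ℂ)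

theorem norm_kerrI_pow_four :
    ‖kerrI c a r x‖ ^ 4 = c ^ 4 / (r ^ 2 + a ^ 2 * x ^ 2) ^ 2 := by
  have h2 : ‖kerrI c a r x‖ ^ 2 = c ^ 2 / (r ^ 2 + a ^ 2 * x ^ 2) := by
    rw [kerrI, norm_div, norm_neg, norm_real, Real.norm_eq_abs, div_pow, sq_abs, Complex.sq_norm,
      normSq_kerrP]
  rw [show ‖kerrI c a r x‖ ^ 4 = (‖kerrI c a r x‖ ^ 2) ^ 2 by ring, h2, div_pow]; ring

theorem im_kerrI : (kerrI c a r x).im = -(c * a * x) / (r ^ 2 + a ^ 2 * x ^ 2) := by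
  simp [kerrI, div_eq_mul_inv, inv_im]; ring

theorem im_inv_kerrI_sq : ((kerrI c a r x) ^ 2)⁻¹.im = -(2 * a * r * x) / c ^ 2 := by
  have : ((kerrI c a r x) ^ 2)⁻¹ = kerrP a r x ^ 2 / ((c ^ 2 : ℝ) : ℂ) := by
    rw [kerrI, div_pow, neg_sq, inv_div]; push_cast; rfl
  rw [this, div_ofReal_im]; simp [pow_two]; ring

theorem hasDerivAt_kerrI_fst (hp : kerrP a r x ≠ 0) :
    HasDerivAt (fun s => kerrI c a s x) (c / kerrP a r x ^ 2) r :=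
  (hasDerivAt_kerrP_fst.neg_const_div (c : ℂ) hp).congr_deriv (by rw [mul_one])

theorem hasDerivAt_kerrI_snd (hp : kerrP a r x ≠ 0) :
    HasDerivAt (fun s => kerrI c a r s) (c * -(Complex.I * a) / kerrP a r x ^ 2) x :=
  hasDerivAt_kerrP_snd.neg_const_div (c : ℂ) hp

theorem div_sq_mul_conj_kerrI (w : ℂ) (hp : kerrP a r x ≠ 0) :
    w / kerrP a r x ^ 2 * conj (kerrI c a r x)
      = -((c / (r ^ 2 + a ^ 2 * x ^ 2) ^ 2 : ℝ) : ℂ) * (w * conj (kerrP a r x)) := by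
  have hp' : conj (kerrP a r x) ≠ 0 := (map_ne_zero _).mpr hp
  rw [kerrI, map_div₀, map_neg, conj_ofReal, ← normSq_kerrP]
  push_cast
  rw [← mul_conj]
  field_simp

theorem im_deriv_fst_kerrI_mul_conj (hp : kerrP a r x ≠ 0) :
    ((c : ℂ) / kerrP a r x ^ 2 * conj (kerrI c a r x)).im
      = -(c ^ 2 * a * x) / (r ^ 2 + a ^ 2 * x ^ 2) ^ 2 := by
  rw [div_sq_mul_conj_kerrI _ hp, neg_mul, neg_im, im_ofReal_mul]
  simp only [mul_im, ofReal_re, ofReal_im, conj_re, conj_im, kerrP_re, kerrP_im]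
  ring

theorem im_deriv_snd_kerrI_mul_conj (hp : kerrP a r x ≠ 0) :
    ((c : ℂ) * -(Complex.I * a) / kerrP a r x ^ 2 * conj (kerrI c a r x)).im
      = c ^ 2 * a * r / (r ^ 2 + a ^ 2 * x ^ 2) ^ 2 := by
  rw [div_sq_mul_conj_kerrI _ hp, neg_mul, neg_im, im_ofReal_mul]
  simp only [mul_im, mul_re, neg_re, neg_im, I_re, I_im, ofReal_re, ofReal_im, conj_re, conj_im,
    kerrP_re, kerrP_im]
  ring

theorem kerrPairing_kerrI_phase (hc : c ≠ 0) (hp : kerrP a r x ≠ 0) :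
    kerrPairing a M (fun r x => kerrI c a r x / conj (kerrI c a r x))
        (fun r x => conj (kerrI c a r x) / kerrI c a r x) r x
      = ((4 * a ^ 2 * ((r ^ 2 - 2 * M * r + a ^ 2) * x ^ 2 + (1 - x ^ 2) * r ^ 2)
          / (r ^ 2 + a ^ 2 * x ^ 2) ^ 3 : ℝ) : ℂ) := by
  have hI : kerrI c a r x ≠ 0 := div_ne_zero (neg_ne_zero.mpr (ofReal_ne_zero.mpr hc)) hp
  have hS := kerrSigma_ne_zero hp
  rw [kerrPairing, mul_assoc _ (deriv _ r),
    deriv_div_conj_mul_deriv_conj_div (hasDerivAt_kerrI_fst hp) hI, mul_assoc _ (deriv _ x),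
    deriv_div_conj_mul_deriv_conj_div (hasDerivAt_kerrI_snd hp) hI,
    im_deriv_fst_kerrI_mul_conj hp, im_deriv_snd_kerrI_mul_conj hp, norm_kerrI_pow_four]
  norm_cast
  field_simp

theorem inv_kerrI_pow_four_mul_kerrPairing (hp : kerrP a r x ≠ 0) :
    (kerrI c a r x ^ 4)⁻¹ * kerrPairing a M (kerrI c a) (kerrI c a) r x
      = (((r ^ 2 - 2 * M * r + a ^ 2) - a ^ 2 * (1 - x ^ 2))
          / ((r ^ 2 + a ^ 2 * x ^ 2) * c ^ 2) : ℝ) := by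
  have hS := kerrSigma_ne_zero hp
  rw [kerrPairing, (hasDerivAt_kerrI_fst hp).deriv, (hasDerivAt_kerrI_snd hp).deriv, kerrI]
  push_cast
  field_simp
  ring_nf
  rw [I_sq]
  ring

def kerrM (c a M r x : ℝ) : ℂ :=
  -(kerrI c a r x ^ 4)⁻¹ * kerrPairing a M (kerrI c a) (kerrI c a) r x
    + kerrI c a r x + conj (kerrI c a r x)

theorem im_kerrM (hp : kerrP a r x ≠ 0) : (kerrM c a M r x).im = 0 := by
  rw [kerrM, neg_mul, inv_kerrI_pow_four_mul_kerrPairing hp, add_assoc, add_conj]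
  simp only [add_im, neg_im, ofReal_im, neg_zero, add_zero]

end

theorem stmt_4_general (a M r x : ℝ) (hM : 0 < M) (p I : ℝ → ℝ → ℂ)
    (hp : ∀ r x : ℝ, p r x = (r : ℂ) - Complex.I * a * x)
    (hI : ∀ r x : ℝ, I r x = -((M ^ ((1 : ℝ) / 3) : ℝ) : ℂ) / p r x)
    (hpne : p r x ≠ 0)
    (Mv : ℂ)
    (hMv : Mv = -((I r x) ^ 4)⁻¹ * kerrPairing a M I I r x
        + I r x + (starRingEnd ℂ) (I r x)) :
    -((‖I r x‖ ^ 4 : ℝ)⁻¹ : ℂ) *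
        kerrPairing a M (fun r x => I r x / (starRingEnd ℂ) (I r x))
          (fun r x => (starRingEnd ℂ) (I r x) / I r x) r x
      - ((2 * ((((I r x) ^ 2)⁻¹).im) * ((2 * I r x - Mv).im) : ℝ) : ℂ)
      = ((-4 * a ^ 2 * M ^ (-(4 : ℝ) / 3) : ℝ) : ℂ) := by
  obtain rfl : p = kerrP a := funext₂ hp
  obtain rfl : I = kerrI (M ^ ((1 : ℝ) / 3)) a := funext₂ hI
  have hc3 : (M ^ ((1 : ℝ) / 3)) ^ 3 = M := by
    rw [← Real.rpow_natCast, ← Real.rpow_mul hM.le]; norm_num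
  have hc4 : M ^ (-(4 : ℝ) / 3) = ((M ^ ((1 : ℝ) / 3)) ^ 4)⁻¹ := by
    rw [← Real.rpow_natCast, ← Real.rpow_mul hM.le, ← Real.rpow_neg hM.le]; norm_num
  have hc : M ^ ((1 : ℝ) / 3) ≠ 0 := (Real.rpow_pos_of_pos hM _).ne'
  have hMv_im : Mv.im = 0 := hMv ▸ im_kerrM hpne
  have h2I_sub_Mv : (2 * kerrI (M ^ ((1 : ℝ) / 3)) a r x - Mv).im
      = 2 * (kerrI (M ^ ((1 : ℝ) / 3)) a r x).im := by
    simp [hMv_im]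
  have hS := kerrSigma_ne_zero hpne
  rw [norm_kerrI_pow_four, kerrPairing_kerrI_phase hc hpne, im_inv_kerrI_sq,
    h2I_sub_Mv, im_kerrI, hc4]
  generalize M ^ ((1 : ℝ) / 3) = c at *
  subst hc3
  rw [← ofReal_inv, ← ofReal_neg, ← ofReal_mul, ← ofReal_sub, ofReal_inj]
  field_simp
  ring

/-- For `M > 0`, `p = r - iax`, `𝓘 = -M^{1/3}/p`,
`𝕄 = -𝓘⁻⁴⟨𝓘,𝓘⟩ + 𝓘 + conj 𝓘`, the second curvature invariant
`𝔸 = -|𝓘|⁻⁴⟨𝓘/conj 𝓘, conj 𝓘/𝓘⟩ - 2·Im(1/𝓘²)·Im(2𝓘 - 𝕄)`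
is the constant `-4a²M^{-4/3}` wherever `p ≠ 0` and `Σ ≠ 0`. -/
theorem stmt_4 (a M r x : ℝ) (hM : 0 < M) (p I : ℝ → ℝ → ℂ)
    (hp : ∀ r x : ℝ, p r x = (r : ℂ) - Complex.I * a * x)
    (hI : ∀ r x : ℝ, I r x = -((M ^ ((1 : ℝ) / 3) : ℝ) : ℂ) / p r x)
    (hSig : r ^ 2 + a ^ 2 * x ^ 2 ≠ 0) (hpne : p r x ≠ 0)
    (Mv : ℂ)
    (hMv : Mv = -((I r x) ^ 4)⁻¹ * kerrPairing a M I I r x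
        + I r x + (starRingEnd ℂ) (I r x)) :
    -((‖I r x‖ ^ 4 : ℝ)⁻¹ : ℂ) *
        kerrPairing a M (fun r x => I r x / (starRingEnd ℂ) (I r x))
          (fun r x => (starRingEnd ℂ) (I r x) / I r x) r x
      - ((2 * ((((I r x) ^ 2)⁻¹).im) * ((2 * I r x - Mv).im) : ℝ) : ℂ)
      = ((-4 * a ^ 2 * M ^ (-(4 : ℝ) / 3) : ℝ) : ℂ) :=
  stmt_4_general a M r x hM p I hp hI hpne Mv hMv
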